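/- arXiv:1001.1380 — 3 statements merged into one kernel-verified Lean document; each statement's English description precedes it below -/
import Mathlib

section
/- For 0 < K < y, the integral over z ∈ ℝ of [(y·e^z − K)⁺ − e^z·(y − K)⁺ − K·(e^z − 1)·1_{y>K}] with respect to a measure n(dz) equals ∫_{−∞}^{ln(K/y)} y·(K/y − e^z) n(dz). -/
open MeasureTheory Real Set

theorem stmt_1 (y K : ℝ) (hK : 0 < K) (hy : K < y)
    (n : Measure ℝ) [SigmaFinite n]
    (hn : Integrable (fun z => min (Real.exp z) (|z| ^ 2)) n) :
    ∫ z, (max (y * Real.exp z - K) 0 - Real.exp z * max (y - K) 0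
        - K * (Real.exp z - 1) * (if y > K then (1 : ℝ) else 0)) ∂n
      = ∫ z in Iio (Real.log (K / y)), y * (K / y - Real.exp z) ∂n := by
  have hy0 : 0 < y := hK.trans hy
  have hKy : 0 < K / y := div_pos hK hy0
  have hyK : y * (K / y) = K := by field_simp
  rw [← integral_indicator measurableSet_Iio]
  apply integral_congr_ae
  filter_upwards with z
  simp only [if_pos hy, mul_one, max_eq_left (sub_nonneg.mpr hy.le)]
  by_cases h : z < Real.log (K / y)
  · have hz : Real.exp z < K / y := by
      rw [← Real.exp_log hKy]; exact Real.exp_lt_exp.mpr h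
    have h1 : y * Real.exp z - K ≤ 0 := by nlinarith
    rw [Set.indicator_of_mem (mem_Iio.mpr h), max_eq_right h1]
    nlinarith
  · have hz : K / y ≤ Real.exp z := by
      rw [← Real.exp_log hKy]; exact Real.exp_le_exp.mpr (not_lt.mp h)
    have h1 : 0 ≤ y * Real.exp z - K := by nlinarith
    rw [Set.indicator_of_notMem (fun hm => h (mem_Iio.mp hm)), max_eq_left h1]
    ring
end

section
/- Let n be a measure on ℝ with ∫ (e^z ∧ |z|²) n(dz) < ∞ and let χ denote its exponential double tail (χ(z) = ∫_{−∞}^z e^x n((−∞,x]) dx for z<0 and χ(z) = ∫_z^∞ e^x n([x,∞)) dx for z>0). Then for all y, K > 0 with ln(K/y) ≠ 0, ∫_ℝ [(y e^z − K)⁺ − e^z (y−K)⁺ − K(e^z − 1)1_{y>K}] n(dz) = y · χ(ln(K/y)). -/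
/-!
Writing `K = y e^L` with `L = log (K / y)`, the integrand is `y (e^L - e^z)⁺` when `L < 0` and
`y (e^z - e^L)⁺` when `L > 0` (put–call parity `a⁺ - a = (-a)⁺`). Both payoffs are
integrals of `e^x` over an interval ending at `z`, so the layer-cake formula turns their
`n`-integrals into `∫ e^x n((-∞, x]) dx` over `x < L`, resp. `∫ e^x n([x, ∞)) dx`
over `x > L`.
The integrability of `e^z ∧ |z|²` makes `n` finite on `[x, ∞)` for `x > 0`, and on `(x, L]` for
`L < 0`; so on the put side either all the tail masses `n((-∞, x])`, `x ≤ L`, are finite, or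
they are all infinite and both sides vanish by the junk-value convention.
-/
open MeasureTheory Real Set
open scoped ENNReal

lemma lintegral_exp_call_payoff (μ : Measure ℝ) (L : ℝ) :
    ∫⁻ z, ENNReal.ofReal (max (exp z - exp L) 0) ∂μ
      = ∫⁻ x in Ioi L, μ (Ici x) * ENNReal.ofReal (exp x) := by
  have layer_cake := lintegral_comp_eq_lintegral_meas_le_mul μ (f := fun z => max (z - L) 0)
    (g := fun t => exp (t + L)) (.of_forall fun z => le_max_right _ _) (by fun_prop)
    (fun _ _ => (by fun_prop : Continuous fun t => exp (t + L)).intervalIntegrable _ _)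
    (.of_forall fun t => (exp_pos _).le)
  have payoff (z : ℝ) :
      ∫ t in (0 : ℝ)..max (z - L) 0, exp (t + L) = max (exp z - exp L) 0 := by
    rw [intervalIntegral.integral_comp_add_right, integral_exp, ← max_add_add_right,
      sub_add_cancel, zero_add, exp_monotone.map_max, ← max_sub_sub_right, sub_self]
  have tail (t : ℝ) (ht : t ∈ Ioi 0) : μ {z | t ≤ max (z - L) 0} = μ (Ici (t + L)) := by
    congr 1
    ext z
    simp [not_le.2 (mem_Ioi.1 ht), le_sub_iff_add_le]
  simp only [payoff] at layer_cake
  rw [layer_cake, setLIntegral_congr_fun measurableSet_Ioi fun t ht => by rw [tail t ht],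
    (measurePreserving_add_right volume L).setLIntegral_comp_emb
      (measurableEmbedding_addRight L) (fun x => μ (Ici x) * ENNReal.ofReal (exp x)),
    image_add_const_Ioi, zero_add]

lemma lintegral_exp_put_payoff (μ : Measure ℝ) (L : ℝ) :
    ∫⁻ z, ENNReal.ofReal (max (exp L - exp z) 0) ∂μ
      = ∫⁻ x in Iio L, μ (Iic x) * ENNReal.ofReal (exp x) := by
  have layer_cake := lintegral_comp_eq_lintegral_meas_le_mul μ (f := fun z => max (L - z) 0)
    (g := fun t => exp (L - t)) (.of_forall fun z => le_max_right _ _) (by fun_prop)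
    (fun _ _ => (by fun_prop : Continuous fun t => exp (L - t)).intervalIntegrable _ _)
    (.of_forall fun t => (exp_pos _).le)
  have payoff (z : ℝ) :
      ∫ t in (0 : ℝ)..max (L - z) 0, exp (L - t) = max (exp L - exp z) 0 := by
    rw [intervalIntegral.integral_comp_sub_left, integral_exp, sub_zero, ← min_sub_sub_left,
      sub_sub_cancel, sub_zero, exp_monotone.map_min, ← max_sub_sub_left, sub_self]
  have tail (t : ℝ) (ht : t ∈ Ioi 0) : μ {z | t ≤ max (L - z) 0} = μ (Iic (L - t)) := by
    congr 1
    ext z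
    simp [not_le.2 (mem_Ioi.1 ht), le_sub_comm]
  simp only [payoff] at layer_cake
  rw [layer_cake, setLIntegral_congr_fun measurableSet_Ioi fun t ht => by rw [tail t ht],
    (Measure.measurePreserving_sub_left volume L).setLIntegral_comp_emb
      (MeasurableEquiv.subLeft L).measurableEmbedding
      (fun x => μ (Iic x) * ENNReal.ofReal (exp x)),
    image_const_sub_Ioi, sub_zero]

lemma setIntegral_exp_mul_toReal {s : Set ℝ} (hs : MeasurableSet s) {m : ℝ → ℝ≥0∞}
    (hm : Measurable m) (hfin : ∀ x ∈ s, m x < ∞) :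
    ∫ x in s, exp x * (m x).toReal = (∫⁻ x in s, m x * ENNReal.ofReal (exp x)).toReal := by
  rw [← integral_toReal (by fun_prop) (ae_restrict_of_forall_mem hs fun x hx =>
    ENNReal.mul_lt_top (hfin x hx) ENNReal.ofReal_lt_top)]
  simp only [ENNReal.toReal_mul, ENNReal.toReal_ofReal (exp_pos _).le, mul_comm]

section LevyTails

variable {n : Measure ℝ} (hn : Integrable (fun z => min (exp z) (|z| ^ 2)) n)
include hn

lemma measure_lt_top_of_le_min_exp_sq {S : Set ℝ} {c : ℝ} (hc : 0 < c)
    (hS : ∀ z ∈ S, c ≤ min (exp z) (|z| ^ 2)) : n S < ∞ :=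
  (measure_mono hS).trans_lt (hn.measure_ge_lt_top hc)

lemma measure_Ici_lt_top_of_pos {x : ℝ} (hx : 0 < x) : n (Ici x) < ∞ := by
  refine measure_lt_top_of_le_min_exp_sq hn (c := min (exp x) (x ^ 2)) (by positivity)
    fun z hz => min_le_min (exp_le_exp.2 hz) ?_
  rw [sq_abs]
  exact pow_le_pow_left₀ hx.le hz 2

lemma measure_Ioc_lt_top_of_neg {x L : ℝ} (hL : L < 0) : n (Ioc x L) < ∞ := by
  refine measure_lt_top_of_le_min_exp_sq hn (c := min (exp x) (L ^ 2))
    (lt_min (exp_pos x) (by nlinarith))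
    fun z hz => min_le_min (exp_le_exp.2 hz.1.le) ?_
  rw [sq_abs]
  nlinarith [hz.2]

lemma integral_exp_call_payoff {L : ℝ} (hL : 0 < L) :
    ∫ z, max (exp z - exp L) 0 ∂n = ∫ x in Ici L, exp x * (n (Ici x)).toReal := by
  rw [integral_eq_lintegral_of_nonneg_ae (f := fun z => max (exp z - exp L) 0)
    (.of_forall fun z => le_max_right _ _) (by fun_prop), lintegral_exp_call_payoff,
    integral_Ici_eq_integral_Ioi, setIntegral_exp_mul_toReal measurableSet_Ioi
      (Antitone.measurable fun a b hab => measure_mono (Ici_subset_Ici.2 hab))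
      fun x hx => measure_Ici_lt_top_of_pos hn (hL.trans hx)]

lemma integral_exp_put_payoff {L : ℝ} (hL : L < 0) :
    ∫ z, max (exp L - exp z) 0 ∂n = ∫ x in Iic L, exp x * (n (Iic x)).toReal := by
  rcases lt_or_eq_of_le (le_top : n (Iic L) ≤ ∞) with hfin | hinf
  · rw [integral_eq_lintegral_of_nonneg_ae (f := fun z => max (exp L - exp z) 0)
      (.of_forall fun z => le_max_right _ _) (by fun_prop), lintegral_exp_put_payoff,
      integral_Iic_eq_integral_Iio, setIntegral_exp_mul_toReal measurableSet_Iio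
        (Monotone.measurable fun a b hab => measure_mono (Iic_subset_Iic.2 hab))
        fun x hx => (measure_mono (Iic_subset_Iic.2 (le_of_lt hx))).trans_lt hfin]
  · have htop (x : ℝ) (hx : x ∈ Iic L) : n (Iic x) = ∞ := by
      by_contra hx_fin
      have : n (Iic L) < ∞ := by
        rw [← Iic_union_Ioc_eq_Iic hx]
        exact (measure_union_le _ _).trans_lt
          (ENNReal.add_lt_top.2 ⟨lt_top_iff_ne_top.2 hx_fin, measure_Ioc_lt_top_of_neg hn hL⟩)
      exact this.ne hinf
    have hgap : 0 < exp L - exp (L - 1) := sub_pos.2 (exp_lt_exp.2 (sub_one_lt L))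
    have not_integrable : ¬Integrable (fun z => max (exp L - exp z) 0) n := fun hint =>
      (hint.measure_ge_lt_top hgap).ne <| measure_mono_top (fun z (hz : z ≤ L - 1) =>
        show exp L - exp (L - 1) ≤ max (exp L - exp z) 0 from
          le_max_of_le_left (by linarith [exp_le_exp.2 hz])) (htop (L - 1) (by simp))
    rw [integral_undef not_integrable, setIntegral_eq_zero_of_forall_eq_zero fun x hx => by
      rw [htop x hx, ENNReal.toReal_top, mul_zero]]

end LevyTails

lemma payoff_eq_of_lt {y K L : ℝ} (hy : 0 ≤ y) (hK : K = y * exp L) (hKy : K < y) (z : ℝ) :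
    max (y * exp z - K) 0 - exp z * max (y - K) 0
        - K * (exp z - 1) * (if y > K then (1 : ℝ) else 0)
      = y * max (exp L - exp z) 0 := by
  have parity := max_zero_sub_max_neg_zero_eq_self (y * exp z - K)
  rw [neg_sub] at parity
  rw [if_pos hKy, max_eq_left (sub_nonneg.2 hKy.le), mul_max_of_nonneg _ _ hy, mul_zero,
    mul_sub y, ← hK]
  linarith

lemma payoff_eq_of_le {y K L : ℝ} (hy : 0 ≤ y) (hK : K = y * exp L) (hyK : y ≤ K) (z : ℝ) :
    max (y * exp z - K) 0 - exp z * max (y - K) 0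
        - K * (exp z - 1) * (if y > K then (1 : ℝ) else 0)
      = y * max (exp z - exp L) 0 := by
  rw [if_neg hyK.not_gt, max_eq_right (sub_nonpos.2 hyK), mul_max_of_nonneg _ _ hy,
    mul_sub y, ← hK]
  simp only [mul_zero, sub_zero]

theorem stmt_4_general (n : Measure ℝ)
    (hn : Integrable (fun z => min (Real.exp z) (|z| ^ 2)) n)
    (chi : ℝ → ℝ)
    (hchi_neg : ∀ z < (0 : ℝ), chi z = ∫ x in Iic z, Real.exp x * (n (Iic x)).toReal)
    (hchi_pos : ∀ z > (0 : ℝ), chi z = ∫ x in Ici z, Real.exp x * (n (Ici x)).toReal)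
    (y K : ℝ) (hy : 0 < y) (hK : 0 < K) (hne : Real.log (K / y) ≠ 0) :
    ∫ z, (max (y * Real.exp z - K) 0 - Real.exp z * max (y - K) 0
        - K * (Real.exp z - 1) * (if y > K then (1 : ℝ) else 0)) ∂n
      = y * chi (Real.log (K / y)) := by
  set L := log (K / y)
  have hK_eq : K = y * exp L := by
    rw [exp_log (div_pos hK hy)]
    field_simp
  rcases hne.lt_or_gt with hL | hL
  · have hKy : K < y := hK_eq ▸ mul_lt_of_lt_one_right hy (exp_lt_one_iff.2 hL)
    simp only [payoff_eq_of_lt hy.le hK_eq hKy]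
    rw [integral_const_mul, integral_exp_put_payoff hn hL, hchi_neg L hL]
  · have hyK : y ≤ K := hK_eq ▸ le_mul_of_one_le_right hy.le (one_lt_exp_iff.2 hL).le
    simp only [payoff_eq_of_le hy.le hK_eq hyK]
    rw [integral_const_mul, integral_exp_call_payoff hn hL, hchi_pos L hL]

theorem stmt_4 (n : Measure ℝ) [SigmaFinite n]
    (hn : Integrable (fun z => min (Real.exp z) (|z| ^ 2)) n)
    (chi : ℝ → ℝ)
    (hchi_neg : ∀ z < (0 : ℝ), chi z = ∫ x in Iic z, Real.exp x * (n (Iic x)).toReal)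
    (hchi_pos : ∀ z > (0 : ℝ), chi z = ∫ x in Ici z, Real.exp x * (n (Ici x)).toReal)
    (y K : ℝ) (hy : 0 < y) (hK : 0 < K) (hne : Real.log (K / y) ≠ 0) :
    ∫ z, (max (y * Real.exp z - K) 0 - Real.exp z * max (y - K) 0
        - K * (Real.exp z - 1) * (if y > K then (1 : ℝ) else 0)) ∂n
      = y * chi (Real.log (K / y)) :=
  stmt_4_general n hn chi hchi_neg hchi_pos y K hy hK hne
end

section
/- With ψ as above (ψ(y) = (y₁,…,y_{d−1}, ln(Σᵢ cᵢ e^{yᵢ})) where cᵢ > 0, Σᵢ cᵢ = 1), for any measure ν on ℝ^d with ∫ (1 ∧ ‖y‖²) ν(dy) < ∞, the pushforward measure ν ∘ ψ⁻¹ satisfies ∫ (1 ∧ ‖z‖²) (ν ∘ ψ⁻¹)(dz) ≤ ∫ (1 ∧ 2‖y‖²) ν(dy) < ∞. -/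
open MeasureTheory Real Set

lemma min_two_mul_aux (t : ℝ) : min 1 (2 * t) ≤ 2 * min 1 t := by
  rcases le_total t 1 with h | h
  · rw [min_eq_right h]; exact min_le_right _ _
  · rw [min_eq_left h, min_eq_left (by linarith)]; norm_num

lemma coord_abs_le_norm {m : ℕ} (y : EuclideanSpace ℝ (Fin m)) (i : Fin m) :
    |y i| ≤ ‖y‖ := by
  rw [EuclideanSpace.norm_eq]
  have : |y i| = √(|y i| ^ 2) := by
    rw [Real.sqrt_sq_eq_abs, abs_abs]
  rw [this]
  apply Real.sqrt_le_sqrt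
  exact Finset.single_le_sum (f := fun j => ‖y j‖ ^ 2)
    (fun j _ => by positivity) (Finset.mem_univ i)

lemma log_sum_abs_le {n : ℕ} (c : Fin (n + 1) → ℝ) (hc : ∀ i, 0 < c i)
    (hsum : ∑ i, c i = 1) (y : EuclideanSpace ℝ (Fin (n + 1))) :
    |Real.log (∑ j, c j * Real.exp (y j))| ≤ ‖y‖ := by
  have hpos : (0:ℝ) < ∑ j, c j * Real.exp (y j) :=
    Finset.sum_pos (fun j _ => mul_pos (hc j) (Real.exp_pos _)) Finset.univ_nonempty
  rw [abs_le]
  constructor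
  · -- Jensen: exp (∑ c y) ≤ ∑ c exp y
    have hj := convexOn_exp.map_sum_le (t := Finset.univ) (w := c) (p := fun j => y j)
      (fun i _ => (hc i).le) hsum (fun i _ => trivial)
    simp only [smul_eq_mul] at hj
    have h1 : ∑ j, c j * y j ≤ Real.log (∑ j, c j * Real.exp (y j)) := by
      rw [Real.le_log_iff_exp_le hpos]; exact hj
    refine le_trans ?_ h1
    have h2 : -‖y‖ = ∑ j, c j * (-‖y‖) := by
      rw [← Finset.sum_mul, hsum, one_mul]
    rw [h2]
    apply Finset.sum_le_sum
    intro j _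
    have := (abs_le.mp (coord_abs_le_norm y j)).1
    nlinarith [hc j]
  · rw [Real.log_le_iff_le_exp hpos]
    calc ∑ j, c j * Real.exp (y j) ≤ ∑ j, c j * Real.exp ‖y‖ := by
          apply Finset.sum_le_sum
          intro j _
          have := (abs_le.mp (coord_abs_le_norm y j)).2
          exact mul_le_mul_of_nonneg_left (Real.exp_le_exp.mpr this) (hc j).le
      _ = Real.exp ‖y‖ := by rw [← Finset.sum_mul, hsum, one_mul]

theorem stmt_18 (n : ℕ) (c : Fin (n + 1) → ℝ) (hc : ∀ i, 0 < c i)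
    (hsum : ∑ i, c i = 1)
    (ν : Measure (EuclideanSpace ℝ (Fin (n + 1)))) [SigmaFinite ν]
    (hν : ∫⁻ y, ENNReal.ofReal (min 1 (‖y‖ ^ 2)) ∂ν < ⊤) :
    let ψ : EuclideanSpace ℝ (Fin (n + 1)) → EuclideanSpace ℝ (Fin (n + 1)) :=
      fun y => (EuclideanSpace.equiv (Fin (n + 1)) ℝ).symm
        (fun i => if i = Fin.last n then Real.log (∑ j, c j * Real.exp (y j)) else y i)
    (∫⁻ z, ENNReal.ofReal (min 1 (‖z‖ ^ 2)) ∂(ν.map ψ)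
        ≤ ∫⁻ y, ENNReal.ofReal (min 1 (2 * ‖y‖ ^ 2)) ∂ν) ∧
    ∫⁻ y, ENNReal.ofReal (min 1 (2 * ‖y‖ ^ 2)) ∂ν < ⊤ := by
  intro ψ
  have hcoordmeas : ∀ i : Fin (n + 1),
      Measurable (fun y : EuclideanSpace ℝ (Fin (n + 1)) => y i) :=
    fun i => (EuclideanSpace.proj (𝕜 := ℝ) i).continuous.measurable
  have hψmeas : Measurable ψ := by
    apply ((EuclideanSpace.equiv (Fin (n + 1)) ℝ).symm.continuous.measurable).comp
    apply measurable_pi_lambda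
    intro i
    by_cases h : i = Fin.last n
    · simp only [h, if_true]
      apply Measurable.log
      exact Finset.measurable_sum _ fun j _ =>
        ((hcoordmeas j).exp.const_mul (c j))
    · simp only [h, if_false]
      exact hcoordmeas i
  have hψnorm : ∀ y, ‖ψ y‖ ^ 2 ≤ 2 * ‖y‖ ^ 2 := by
    intro y
    have hnormsq : ∀ x : EuclideanSpace ℝ (Fin (n + 1)), ‖x‖ ^ 2 = ∑ i, (x i) ^ 2 := by
      intro x
      rw [EuclideanSpace.norm_eq, Real.sq_sqrt (by positivity)]
      simp [sq_abs]
    have hψi : ∀ i, (ψ y) i =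
        if i = Fin.last n then Real.log (∑ j, c j * Real.exp (y j)) else y i := by
      intro i; rfl
    rw [hnormsq, hnormsq y]
    have hsplit : ∑ i, (ψ y i) ^ 2 =
        (∑ i ∈ Finset.univ.erase (Fin.last n), (y i) ^ 2) +
          (Real.log (∑ j, c j * Real.exp (y j))) ^ 2 := by
      rw [← Finset.add_sum_erase _ _ (Finset.mem_univ (Fin.last n)),
          hψi (Fin.last n), if_pos rfl, add_comm]
      congr 1
      apply Finset.sum_congr rfl
      intro i hi
      rw [hψi, if_neg (Finset.mem_erase.mp hi).1]
    rw [hsplit]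
    have h1 : ∑ i ∈ Finset.univ.erase (Fin.last n), (y i) ^ 2 ≤ ∑ i, (y i) ^ 2 :=
      Finset.sum_le_sum_of_subset_of_nonneg (Finset.erase_subset _ _)
        (fun i _ _ => by positivity)
    have h2 : (Real.log (∑ j, c j * Real.exp (y j))) ^ 2 ≤ ∑ i, (y i) ^ 2 := by
      rw [← hnormsq y, ← sq_abs]
      exact pow_le_pow_left₀ (abs_nonneg _) (log_sum_abs_le c hc hsum y) 2
    linarith
  constructor
  · rw [lintegral_map (by fun_prop) hψmeas]
    apply lintegral_mono
    intro y
    apply ENNReal.ofReal_le_ofReal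
    exact min_le_min le_rfl (hψnorm y)
  · have hb : ∀ y : EuclideanSpace ℝ (Fin (n + 1)),
        ENNReal.ofReal (min 1 (2 * ‖y‖ ^ 2)) ≤ 2 * ENNReal.ofReal (min 1 (‖y‖ ^ 2)) := by
      intro y
      calc ENNReal.ofReal (min 1 (2 * ‖y‖ ^ 2))
          ≤ ENNReal.ofReal (2 * min 1 (‖y‖ ^ 2)) :=
            ENNReal.ofReal_le_ofReal (min_two_mul_aux _)
        _ = 2 * ENNReal.ofReal (min 1 (‖y‖ ^ 2)) := by
            rw [ENNReal.ofReal_mul (by norm_num), ENNReal.ofReal_ofNat]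
    calc ∫⁻ y, ENNReal.ofReal (min 1 (2 * ‖y‖ ^ 2)) ∂ν
        ≤ ∫⁻ y, 2 * ENNReal.ofReal (min 1 (‖y‖ ^ 2)) ∂ν := lintegral_mono hb
      _ = 2 * ∫⁻ y, ENNReal.ofReal (min 1 (‖y‖ ^ 2)) ∂ν := lintegral_const_mul 2 (by fun_prop)
      _ < ⊤ := ENNReal.mul_lt_top (by norm_num) hν
end
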